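/- Let N be a rooted phylogenetic network on a finite set X. Then the normalisation Ñ of N is itself a rooted phylogenetic network on X: it is a finite acyclic directed graph whose unique in-degree-0 vertex is the root ρ of N, whose out-degree-0 vertices are exactly the elements of X and each has in-degree 1, and each of whose other non-root vertices has either in-degree 1 and out-degree at least 2, or out-degree 1 and in-degree at least 2. -/

import Mathlib

/-!
Formalisation framework for rooted phylogenetic networks.

A network is represented as a directed graph on an ambient vertex type `V`:
a vertex set `verts`, a root vertex `root`, and an arc relation `arc`.
-/

structure Net (V : Type*) where
  verts : Set V
  root : V
  arc : V → V → Prop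

namespace Net

variable {V : Type*} {W : Type*}

/-- `N.reach u v` means there is a (possibly empty) directed path from `u` to `v`. -/
def reach (N : Net V) : V → V → Prop := Relation.ReflTransGen N.arc

/-- The in-degree of a vertex. -/
noncomputable def inDeg (N : Net V) (v : V) : ℕ := {u | N.arc u v}.ncard

/-- The out-degree of a vertex. -/
noncomputable def outDeg (N : Net V) (v : V) : ℕ := {w | N.arc v w}.ncard

/-- The leaves of `N`: the vertices of out-degree 0. -/
def leaves (N : Net V) : Set V := {v ∈ N.verts | N.outDeg v = 0}

/-- `N.IsPathFrom u v l` : the list `l` is a directed path in `N` from `u` to `v`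
(consecutive entries joined by arcs; a one-element list is the empty path). -/
def IsPathFrom (N : Net V) (u v : V) (l : List V) : Prop :=
  l.Chain' N.arc ∧ l.head? = some u ∧ l.getLast? = some v

/-- A vertex is visible if some leaf is such that every directed path from the
root to that leaf passes through the vertex. -/
def Visible (N : Net V) (x : V) : Prop :=
  x ∈ N.verts ∧ ∃ y ∈ N.leaves, ∀ l : List V, N.IsPathFrom N.root y l → x ∈ l

/-- A subdividing vertex is one of in-degree 1 and out-degree 1. -/
def Subdividing (N : Net V) (v : V) : Prop := N.inDeg v = 1 ∧ N.outDeg v = 1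

/-- The digraph `Cov(N)` on the visible vertices of `N`: an arc `(u,v)` whenever
`u ≠ v`, `u →_N v`, and no visible vertex lies strictly between `u` and `v`. -/
def cov (N : Net V) : Net V where
  verts := {v | N.Visible v}
  root := N.root
  arc u v := N.Visible u ∧ N.Visible v ∧ u ≠ v ∧ N.reach u v ∧
    ¬ ∃ w, N.Visible w ∧ w ≠ u ∧ w ≠ v ∧ N.reach u w ∧ N.reach w v

/-- The normalisation `Ñ` of `N`: obtained from `Cov(N)` by suppressing every
subdividing vertex.  Its vertices are the visible vertices of `N` that are not
subdividing in `Cov(N)`, with an arc `(u,v)` whenever `Cov(N)` has a directed path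
from `u` to `v` (of length at least one) all of whose interior vertices are
subdividing in `Cov(N)`. -/
def normalise (N : Net V) : Net V where
  verts := {v | N.Visible v ∧ ¬ N.cov.Subdividing v}
  root := N.root
  arc u v := (N.Visible u ∧ ¬ N.cov.Subdividing u) ∧ (N.Visible v ∧ ¬ N.cov.Subdividing v) ∧
    ∃ l : List V, N.cov.IsPathFrom u v l ∧ 2 ≤ l.length ∧
      ∀ w ∈ l.tail.dropLast, N.cov.Subdividing w

/-- `N` is a rooted phylogenetic network on the finite nonempty leaf set `X`. -/
structure IsPhylo (N : Net V) (X : Set V) : Prop where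
  finite : N.verts.Finite
  nonempty : X.Nonempty
  arc_mem : ∀ ⦃u v : V⦄, N.arc u v → u ∈ N.verts ∧ v ∈ N.verts
  acyclic : ∀ ⦃u v : V⦄, N.arc u v → ¬ N.reach v u
  root_mem : N.root ∈ N.verts
  root_inDeg : N.inDeg N.root = 0
  root_unique : ∀ v ∈ N.verts, N.inDeg v = 0 → v = N.root
  leaves_eq : N.leaves = X
  leaf_inDeg : ∀ x ∈ X, N.inDeg x = 1
  interior_deg : ∀ v ∈ N.verts, v ≠ N.root → v ∉ X →
    (N.inDeg v = 1 ∧ 2 ≤ N.outDeg v) ∨ (N.outDeg v = 1 ∧ 2 ≤ N.inDeg v)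

/-- `N` has no shortcuts: no arc `(u,v)` such that there is also a directed path
from `u` to `v` of length at least 2 (i.e. a path-list with at least 3 entries). -/
def NoShortcuts (N : Net V) : Prop :=
  ∀ u v : V, N.arc u v → ¬ ∃ l : List V, N.IsPathFrom u v l ∧ 3 ≤ l.length

/-- Tree-child: every vertex is visible. -/
def TreeChild (N : Net V) : Prop := ∀ v ∈ N.verts, N.Visible v

/-- Normal: tree-child with no shortcuts. -/
def Normal (N : Net V) : Prop := N.TreeChild ∧ N.NoShortcuts

/-- A tree: every vertex has in-degree at most 1. -/
def IsTree (N : Net V) : Prop := ∀ v ∈ N.verts, N.inDeg v ≤ 1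

/-- The cluster of `v`: the set of leaves reachable from `v`. -/
def cluster (N : Net V) (v : V) : Set V := {x ∈ N.leaves | N.reach v x}

/-- The identifying set of `v`: the set of leaves `x` such that every directed
path from the root to `x` passes through `v`. -/
def ident (N : Net V) (v : V) : Set V :=
  {x ∈ N.leaves | ∀ l : List V, N.IsPathFrom N.root x l → v ∈ l}

/-- A digraph isomorphism between two networks, given by the map `f`. -/
def NetEquiv (M : Net V) (M' : Net W) (f : V → W) : Prop :=
  Set.BijOn f M.verts M'.verts ∧
    ∀ u ∈ M.verts, ∀ v ∈ M.verts, (M.arc u v ↔ M'.arc (f u) (f v))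

/-- Two networks over the same ambient type are equivalent relative to a leaf set
`X` if there is a digraph isomorphism between them fixing each element of `X`. -/
def EquivOn (M M' : Net V) (X : Set V) : Prop :=
  ∃ f : V → V, NetEquiv M M' f ∧ ∀ x ∈ X, f x = x

/-- `N₁ ⊕ N₂` : disjoint copies of `N₁` and `N₂` under a new root (`none`). -/
def oplus {V₁ V₂ : Type*} (N₁ : Net V₁) (N₂ : Net V₂) : Net (Option (V₁ ⊕ V₂)) where
  verts := insert none
    ((fun v => some (Sum.inl v)) '' N₁.verts ∪ (fun v => some (Sum.inr v)) '' N₂.verts)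
  root := none
  arc a b :=
    match a, b with
    | none, some (Sum.inl w) => w = N₁.root
    | none, some (Sum.inr w) => w = N₂.root
    | some (Sum.inl u), some (Sum.inl w) => N₁.arc u w
    | some (Sum.inr u), some (Sum.inr w) => N₂.arc u w
    | _, _ => False

/-- `N₁ ⊗ N₂` : identify each leaf `x` of `N₁` with the root of its own copy of `N₂`;
the copy of a non-leaf vertex `u` of `N₁` is `Sum.inl u`, and the vertex `w` of the
copy of `N₂` attached at leaf `x` of `N₁` is `Sum.inr (x, w)`. -/
def otimes {V₁ V₂ : Type*} (N₁ : Net V₁) (N₂ : Net V₂) : Net (V₁ ⊕ V₁ × V₂) where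
  verts := Sum.inl '' (N₁.verts \ N₁.leaves) ∪ Sum.inr '' (N₁.leaves ×ˢ N₂.verts)
  root := Sum.inl N₁.root
  arc a b :=
    match a, b with
    | Sum.inl u, Sum.inl w => N₁.arc u w ∧ w ∉ N₁.leaves
    | Sum.inl u, Sum.inr (x, w) => x ∈ N₁.leaves ∧ N₁.arc u x ∧ w = N₂.root
    | Sum.inr (x, w), Sum.inr (x', w') => x = x' ∧ x ∈ N₁.leaves ∧ N₂.arc w w'
    | _, _ => False

end Net

/-- A hierarchy: a collection of sets any two of which are disjoint or nested. -/
def IsHierarchy {V : Type*} (C : Set (Set V)) : Prop :=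
  ∀ A ∈ C, ∀ B ∈ C, A ∩ B = ∅ ∨ A ⊆ B ∨ B ⊆ A


/-!
At a vertex `v` of `Ñ` the arcs of `Ñ` correspond bijectively to those of `Cov(N)`: an arc
`(w, v)` of `Cov(N)` is followed backwards through subdividing vertices to a vertex of `Ñ`, an arc
`(v, w)` forwards. Injectivity is where visibility enters: if such chains from `u` entered `v`
through distinct vertices `w₁ ≠ w₂`, with `w₁` subdividing, then the leaf witnessing the visibility
of `w₁` lies below `v`, and the path root ⇝ `u` ⇝ `w₂` → `v` ⇝ leaf avoids `w₁`; chains leaving `v`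
are dual. So `Ñ` has the degrees of `Cov(N)`, which has in-degree 0 exactly at the root, out-degree
0 exactly at the leaves, and in- (out-)degree 1 wherever `N` has it; at a vertex of `Ñ`, which is
not subdividing, the other degree is then at least 2.
-/

namespace Relation

variable {α : Type*} {r : α → α → Prop} {p : α → Prop} {a b c : α}

theorem ReflTransGen.eq_of_rightUnique (hr : Relator.RightUnique r) (hb : ReflTransGen r a b)
    (hc : ReflTransGen r a c) (hb' : ∀ x, ¬ r b x) (hc' : ∀ x, ¬ r c x) : b = c := by
  rcases hb.total_of_right_unique hr hc with h | h
  · rcases h.cases_head with h | ⟨x, hx, -⟩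
    exacts [h, absurd hx (hb' x)]
  · rcases h.cases_head with h | ⟨x, hx, -⟩
    exacts [h.symm, absurd hx (hc' x)]

theorem exists_rel_reflTransGen_iff :
    (∃ w, r a w ∧ ReflTransGen (fun x z => r x z ∧ p x) w b) ↔
      ∃ w, ReflTransGen (fun x z => r x z ∧ p z) a w ∧ r w b := by
  constructor
  · rintro ⟨w, haw, h⟩
    induction h with
    | refl => exact ⟨a, .refl, haw⟩
    | tail _ hxz ih =>
      obtain ⟨w', hw', hw'x⟩ := ih
      exact ⟨_, hw'.tail ⟨hw'x, hxz.2⟩, hxz.1⟩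
  · rintro ⟨w, h, hwb⟩
    induction h using ReflTransGen.head_induction_on with
    | refl => exact ⟨b, hwb, .refl⟩
    | head hxz _ ih =>
      obtain ⟨w', hw', hw'b⟩ := ih
      exact ⟨_, hxz.1, .head ⟨hw', hxz.2⟩ hw'b⟩

end Relation

open Relation

namespace Net

variable {V : Type*} {M N : Net V} {X : Set V} {P : V → Prop} {a b c d s t u v w x y z : V}

theorem isPathFrom_iff {l : List V} :
    M.IsPathFrom u v l ↔ l.IsChain M.arc ∧ l.head? = some u ∧ l.getLast? = some v :=
  Iff.rfl

theorem IsPathFrom.head_eq {l : List V} (h : M.IsPathFrom u v (x :: l)) : x = u :=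
  Option.some.inj h.2.1

theorem isPathFrom_singleton : M.IsPathFrom u v [x] ↔ u = x ∧ v = x := by
  simp [isPathFrom_iff, eq_comm]

theorem isPathFrom_cons_cons {l : List V} :
    M.IsPathFrom u v (x :: y :: l) ↔ u = x ∧ M.arc x y ∧ M.IsPathFrom y v (y :: l) := by
  simp only [isPathFrom_iff, List.isChain_cons_cons, List.head?_cons, eq_comm, Option.some.injEq,
    List.getLast?_cons_cons, true_and]
  tauto

theorem exists_isPathFrom_dropLast_iff :
    (∃ l, M.IsPathFrom u v l ∧ ∀ x ∈ l.dropLast, P x) ↔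
      ReflTransGen (fun x z => M.arc x z ∧ P x) u v := by
  constructor
  · rintro ⟨l, hl, hP⟩
    induction l generalizing u with
    | nil => simp [isPathFrom_iff] at hl
    | cons x l ih =>
      rcases l with _ | ⟨y, l⟩
      · obtain ⟨rfl, rfl⟩ := isPathFrom_singleton.1 hl
        exact .refl
      · obtain ⟨rfl, hxy, hl⟩ := isPathFrom_cons_cons.1 hl
        simp only [List.dropLast_cons_cons, List.mem_cons, forall_eq_or_imp] at hP
        exact .head ⟨hxy, hP.1⟩ (ih hl hP.2)
  · intro h
    induction h using ReflTransGen.head_induction_on with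
    | refl => exact ⟨[v], isPathFrom_singleton.2 ⟨rfl, rfl⟩, by simp⟩
    | head hxy _ ih =>
      obtain ⟨_ | ⟨z, l⟩, hl, hP⟩ := ih
      · simp [isPathFrom_iff] at hl
      · obtain rfl := hl.head_eq
        refine ⟨_ :: z :: l, isPathFrom_cons_cons.2 ⟨rfl, hxy.1, hl⟩, ?_⟩
        simpa [List.dropLast_cons_cons] using ⟨hxy.2, hP⟩

theorem exists_isPathFrom_interior_iff :
    (∃ l, M.IsPathFrom u v l ∧ 2 ≤ l.length ∧ ∀ x ∈ l.tail.dropLast, P x) ↔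
      ∃ w, M.arc u w ∧ ReflTransGen (fun x z => M.arc x z ∧ P x) w v := by
  simp_rw [← exists_isPathFrom_dropLast_iff]
  constructor
  · rintro ⟨_ | ⟨x, _ | ⟨y, l⟩⟩, hl, hlen, hP⟩
    · simp at hlen
    · simp at hlen
    · obtain ⟨rfl, hxy, hl⟩ := isPathFrom_cons_cons.1 hl
      exact ⟨y, hxy, y :: l, hl, hP⟩
  · rintro ⟨w, huw, _ | ⟨x, l⟩, hl, hP⟩
    · simp [isPathFrom_iff] at hl
    · obtain rfl := hl.head_eq
      exact ⟨u :: x :: l, isPathFrom_cons_cons.2 ⟨rfl, huw, hl⟩, by simp, hP⟩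

/-- `M.Avoids a u v`: some directed path of `M` from `u` to `v` does not pass through `a`. -/
def Avoids (M : Net V) (a u v : V) : Prop :=
  u ≠ a ∧ ReflTransGen (fun x z => M.arc x z ∧ z ≠ a) u v

theorem Avoids.ne_right (h : M.Avoids a u v) : v ≠ a := by
  rcases h.2.cases_tail with rfl | ⟨_, -, -, hv⟩
  exacts [h.1, hv]

theorem Avoids.trans (h₁ : M.Avoids a u v) (h₂ : M.Avoids a v w) : M.Avoids a u w :=
  ⟨h₁.1, h₁.2.trans h₂.2⟩

theorem Avoids.reach (h : M.Avoids a u v) : M.reach u v :=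
  ReflTransGen.mono (fun _ _ h => h.1) _ _ h.2

theorem avoids_iff_source :
    M.Avoids a u v ↔ v ≠ a ∧ ReflTransGen (fun x z => M.arc x z ∧ x ≠ a) u v := by
  constructor
  · rintro ⟨hu, h⟩
    induction h with
    | refl => exact ⟨hu, .refl⟩
    | tail _ hxz ih => exact ⟨hxz.2, ih.2.tail ⟨hxz.1, ih.1⟩⟩
  · rintro ⟨hv, h⟩
    induction h using ReflTransGen.head_induction_on with
    | refl => exact ⟨hv, .refl⟩
    | head hxz _ ih => exact ⟨hxz.2, .head ⟨hxz.1, ih.1⟩ ih.2⟩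

theorem Avoids.of_forall_arc_to (h : M.Avoids a u w) (hu : u ≠ b)
    (hb : ∀ x, M.arc x b → x = a) : M.Avoids b u w :=
  ⟨hu, ReflTransGen.mono (fun x _ hxz => ⟨hxz.1, fun hz => hxz.2 (hb x (hz ▸ hxz.1))⟩) _ _
    (avoids_iff_source.1 h).2⟩

theorem Avoids.of_forall_arc_from (h : M.Avoids a u w) (hw : w ≠ b)
    (hb : ∀ z, M.arc b z → z = a) : M.Avoids b u w :=
  avoids_iff_source.2
    ⟨hw, ReflTransGen.mono (fun _ z hxz => ⟨hxz.1, fun hx => hxz.2 (hb z (hx ▸ hxz.1))⟩) _ _ h.2⟩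

theorem avoids_of_reach (h : M.reach u v) (hav : ¬ (M.reach u a ∧ M.reach a v)) :
    M.Avoids a u v := by
  induction h with
  | refl => exact ⟨fun hu => hav ⟨hu ▸ .refl, hu ▸ .refl⟩, .refl⟩
  | tail hux hxz ih =>
    have hu := ih fun h => hav ⟨h.1, h.2.tail hxz⟩
    exact ⟨hu.1, hu.2.tail ⟨hxz, fun hz => hav ⟨hz ▸ hux.tail hxz, hz ▸ .refl⟩⟩⟩

theorem forall_isPathFrom_mem_iff :
    (∀ l, M.IsPathFrom u v l → a ∈ l) ↔ ¬ M.Avoids a u v := by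
  constructor
  · rintro h ⟨hu, hp⟩
    obtain ⟨l, hchain, hlast⟩ := List.exists_isChain_cons_of_relationReflTransGen hp
    have hpath : M.IsPathFrom u v (u :: l) := ⟨hchain.imp fun _ _ h => h.1, rfl,
      by rw [List.getLast?_eq_some_getLast (List.cons_ne_nil _ _), hlast]⟩
    exact hchain.induction (· ≠ a) _ (fun _ _ h _ => h.2) (fun _ => hu) a (h _ hpath) rfl
  · rintro h (_ | ⟨x, l⟩) hl
    · simp [isPathFrom_iff] at hl
    obtain rfl := hl.head_eq
    by_contra ha
    refine h ⟨fun hx => ha (hx ▸ List.mem_cons_self), ?_⟩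
    refine List.relationReflTransGen_of_exists_isChain_cons l (hl.1.imp_of_mem_tail_imp
      fun _ z _ hz hxz => ⟨hxz, fun h => ha (h ▸ List.mem_of_mem_tail hz)⟩) ?_
    exact Option.some.inj ((List.getLast?_eq_some_getLast _).symm.trans hl.2.2)

theorem visible_iff : N.Visible a ↔ a ∈ N.verts ∧ ∃ y ∈ N.leaves, ¬ N.Avoids a N.root y := by
  simp only [Visible, forall_isPathFrom_mem_iff]

theorem visible_of_mem_leaves (hy : y ∈ N.leaves) : N.Visible y :=
  visible_iff.2 ⟨hy.1, y, hy, fun h => h.ne_right rfl⟩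

theorem exists_arc_to_of_reach (h : M.reach u v) (hne : u ≠ v) :
    ∃ x, M.reach u x ∧ M.arc x v := by
  rcases h.cases_tail with rfl | h
  exacts [absurd rfl hne, h]

theorem exists_arc_from_of_reach (h : M.reach u v) (hne : u ≠ v) :
    ∃ x, M.arc u x ∧ M.reach x v := by
  rcases h.cases_head with rfl | h
  exacts [absurd rfl hne, h]

theorem inDeg_eq_zero_iff (h : {u | M.arc u v}.Finite) :
    M.inDeg v = 0 ↔ ∀ u, ¬ M.arc u v := by
  rw [inDeg, Set.ncard_eq_zero h, Set.eq_empty_iff_forall_notMem]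
  rfl

theorem outDeg_eq_zero_iff (h : {w | M.arc v w}.Finite) :
    M.outDeg v = 0 ↔ ∀ w, ¬ M.arc v w := by
  rw [outDeg, Set.ncard_eq_zero h, Set.eq_empty_iff_forall_notMem]
  rfl

theorem reach_of_cov_arc (h : N.cov.arc u v) : N.reach u v := h.2.2.2.1

theorem ne_of_cov_arc (h : N.cov.arc u v) : u ≠ v := h.2.2.1

theorem reach_of_cov_reach (h : N.cov.reach u v) : N.reach u v :=
  ReflTransGen.lift' id (fun _ _ h => reach_of_cov_arc h) _ _ h

theorem visible_of_cov_reach (h : N.cov.reach u v) (hu : N.Visible u) : N.Visible v := by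
  rcases h.cases_tail with rfl | ⟨_, -, h⟩
  exacts [hu, h.2.1]

theorem visible_of_cov_reach' (h : N.cov.reach u v) (hv : N.Visible v) : N.Visible u := by
  rcases h.cases_head with rfl | ⟨_, h, -⟩
  exacts [hv, h.1]

theorem Avoids.of_cov (h : N.cov.Avoids a u v) (ha : N.Visible a) : N.Avoids a u v := by
  obtain ⟨hu, h⟩ := h
  induction h with
  | refl => exact ⟨hu, .refl⟩
  | tail _ hxz ih =>
    exact ih.trans (avoids_of_reach (reach_of_cov_arc hxz.1) fun h =>
      hxz.1.2.2.2.2 ⟨a, ha, ih.ne_right.symm, hxz.2.symm, h⟩)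

theorem Subdividing.eq_of_arc_from (h : M.Subdividing x) (hb : M.arc x b) (hc : M.arc x c) :
    b = c := by
  obtain ⟨z, hz⟩ := Set.ncard_eq_one.1 h.2
  exact (Set.ext_iff.1 hz b).1 hb ▸ ((Set.ext_iff.1 hz c).1 hc).symm

theorem Subdividing.eq_of_arc_to (h : M.Subdividing x) (ha : M.arc a x) (hb : M.arc b x) :
    a = b := by
  obtain ⟨z, hz⟩ := Set.ncard_eq_one.1 h.1
  exact (Set.ext_iff.1 hz a).1 ha ▸ ((Set.ext_iff.1 hz b).1 hb).symm

theorem Subdividing.exists_arc_from (h : M.Subdividing x) : ∃ z, M.arc x z :=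
  Set.nonempty_of_ncard_ne_zero (s := {z | M.arc x z})
    (show M.outDeg x ≠ 0 from h.2 ▸ one_ne_zero)

theorem Subdividing.exists_arc_to (h : M.Subdividing x) : ∃ z, M.arc z x :=
  Set.nonempty_of_ncard_ne_zero (s := {z | M.arc z x})
    (show M.inDeg x ≠ 0 from h.1 ▸ one_ne_zero)

theorem visible_of_cov_subdividing (h : N.cov.Subdividing x) : N.Visible x :=
  h.exists_arc_from.choose_spec.1

/- `ReflTransGen M.arcFromSubdividing w u` says that some path from `w` to `u` has all its vertices
but `u` subdividing, and `ReflTransGen M.arcToSubdividing u w` that some path from `u` to `w` has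
all its vertices but `u` subdividing. -/
def arcFromSubdividing (M : Net V) (x z : V) : Prop := M.arc x z ∧ M.Subdividing x

def arcToSubdividing (M : Net V) (x z : V) : Prop := M.arc x z ∧ M.Subdividing z

theorem reach_of_reflTransGen_arcFromSubdividing (h : ReflTransGen M.arcFromSubdividing u v) :
    M.reach u v :=
  ReflTransGen.mono (fun _ _ h => h.1) _ _ h

theorem reach_of_reflTransGen_arcToSubdividing (h : ReflTransGen M.arcToSubdividing u v) :
    M.reach u v :=
  ReflTransGen.mono (fun _ _ h => h.1) _ _ h

theorem eq_of_reflTransGen_arcFromSubdividing (h₁ : ReflTransGen M.arcFromSubdividing w u)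
    (hu : ¬ M.Subdividing u) (h₂ : ReflTransGen M.arcFromSubdividing w v)
    (hv : ¬ M.Subdividing v) : u = v :=
  h₁.eq_of_rightUnique (fun _ _ _ hb hc => hb.2.eq_of_arc_from hb.1 hc.1) h₂
    (fun _ h => hu h.2) (fun _ h => hv h.2)

theorem eq_of_reflTransGen_arcToSubdividing (h₁ : ReflTransGen M.arcToSubdividing u w)
    (hu : ¬ M.Subdividing u) (h₂ : ReflTransGen M.arcToSubdividing v w)
    (hv : ¬ M.Subdividing v) : u = v :=
  (reflTransGen_swap.2 h₁).eq_of_rightUnique (fun _ _ _ hb hc => hb.2.eq_of_arc_to hb.1 hc.1)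
    (reflTransGen_swap.2 h₂) (fun _ h => hu h.2) (fun _ h => hv h.2)

theorem normalise_arc_iff :
    N.normalise.arc u v ↔ (N.Visible u ∧ ¬ N.cov.Subdividing u) ∧
      (N.Visible v ∧ ¬ N.cov.Subdividing v) ∧
        ∃ w, N.cov.arc u w ∧ ReflTransGen N.cov.arcFromSubdividing w v :=
  and_congr_right' (and_congr_right' exists_isPathFrom_interior_iff)

theorem normalise_arc_iff' :
    N.normalise.arc u v ↔ (N.Visible u ∧ ¬ N.cov.Subdividing u) ∧
      (N.Visible v ∧ ¬ N.cov.Subdividing v) ∧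
        ∃ w, ReflTransGen N.cov.arcToSubdividing u w ∧ N.cov.arc w v :=
  normalise_arc_iff.trans (and_congr_right' (and_congr_right' exists_rel_reflTransGen_iff))

namespace IsPhylo

theorem reach_antisymm (hN : N.IsPhylo X) (huv : N.reach u v) (hvu : N.reach v u) : u = v := by
  rcases huv.cases_head with h | ⟨x, hux, hxv⟩
  exacts [h, absurd (hxv.trans hvu) (hN.acyclic hux)]

theorem exists_reach_maximal (hN : N.IsPhylo X) {S : Set V} (hS : S ⊆ N.verts)
    (hne : S.Nonempty) : ∃ a ∈ S, ∀ b ∈ S, N.reach a b → b = a := by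
  obtain ⟨a, haS, hmax⟩ :=
    (hN.finite.subset hS).exists_maximalFor (fun x => {z | N.reach z x}) S hne
  exact ⟨a, haS, fun b hb hab =>
    hN.reach_antisymm (hmax hb (fun _ hz => hz.trans hab) .refl) hab⟩

theorem exists_reach_minimal (hN : N.IsPhylo X) {S : Set V} (hS : S ⊆ N.verts)
    (hne : S.Nonempty) : ∃ a ∈ S, ∀ b ∈ S, N.reach b a → b = a := by
  obtain ⟨a, haS, hmin⟩ :=
    (hN.finite.subset hS).exists_minimalFor (fun x => {z | N.reach z x}) S hne
  exact ⟨a, haS, fun b hb hba =>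
    hN.reach_antisymm hba (hmin hb (fun _ hz => hz.trans hba) .refl)⟩

theorem root_reach (hN : N.IsPhylo X) (hv : v ∈ N.verts) : N.reach N.root v := by
  obtain ⟨m, ⟨hm, hmv⟩, hmin⟩ := hN.exists_reach_minimal
    (S := {x | x ∈ N.verts ∧ N.reach x v}) (fun _ h => h.1) ⟨v, hv, .refl⟩
  obtain rfl : m = N.root := by
    by_contra hne
    obtain ⟨p, hp⟩ := Set.nonempty_of_ncard_ne_zero (mt (hN.root_unique m hm) hne)
    obtain rfl := hmin p ⟨(hN.arc_mem hp).1, .head hp hmv⟩ (.single hp)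
    exact hN.acyclic hp .refl
  exact hmv

theorem not_arc_to_root (hN : N.IsPhylo X) : ¬ N.arc u N.root :=
  (inDeg_eq_zero_iff (hN.finite.subset fun _ h => (hN.arc_mem h).1)).1 hN.root_inDeg u

theorem not_arc_from_leaf (hN : N.IsPhylo X) (hy : y ∈ N.leaves) : ¬ N.arc y z :=
  (outDeg_eq_zero_iff (hN.finite.subset fun _ h => (hN.arc_mem h).2)).1 hy.2 z

theorem root_visible (hN : N.IsPhylo X) : N.Visible N.root := by
  obtain ⟨x, hx⟩ := hN.nonempty
  exact visible_iff.2 ⟨hN.root_mem, x, hN.leaves_eq ▸ hx, fun h => h.1 rfl⟩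

theorem exists_leaf_of_visible (hN : N.IsPhylo X) (ha : N.Visible a) :
    ∃ y ∈ N.leaves, N.reach a y ∧ ¬ N.Avoids a N.root y := by
  obtain ⟨-, y, hy, hyA⟩ := visible_iff.1 ha
  refine ⟨y, hy, by_contra fun hay => hyA ?_, hyA⟩
  exact avoids_of_reach (hN.root_reach hy.1) fun h => hay h.2

theorem exists_cov_arc_from (hN : N.IsPhylo X) (ha : N.Visible a) (hd : N.Visible d)
    (had : N.reach a d) (hne : a ≠ d) : ∃ c, N.cov.arc a c ∧ N.reach c d := by
  obtain ⟨c, ⟨hc, hac, hcd, hca⟩, hmin⟩ :=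
    hN.exists_reach_minimal (S := {x | N.Visible x ∧ N.reach a x ∧ N.reach x d ∧ x ≠ a})
      (fun _ h => h.1.1) ⟨d, hd, had, .refl, hne.symm⟩
  refine ⟨c, ⟨ha, hc, hca.symm, hac, ?_⟩, hcd⟩
  rintro ⟨x, hx, hxa, hxc, hax, hxc'⟩
  exact hxc (hmin x ⟨hx, hax, hxc'.trans hcd, hxa⟩ hxc')

theorem exists_cov_arc_to (hN : N.IsPhylo X) (ha : N.Visible a) (hd : N.Visible d)
    (had : N.reach a d) (hne : a ≠ d) : ∃ p, N.reach a p ∧ N.cov.arc p d := by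
  obtain ⟨p, ⟨hp, hap, hpd, hpd'⟩, hmax⟩ :=
    hN.exists_reach_maximal (S := {x | N.Visible x ∧ N.reach a x ∧ N.reach x d ∧ x ≠ d})
      (fun _ h => h.1.1) ⟨a, ha, .refl, had, hne⟩
  refine ⟨p, hap, hp, hd, hpd', hpd, ?_⟩
  rintro ⟨x, hx, hxp, hxd, hpx, hxd'⟩
  exact hxp (hmax x ⟨hx, hap.trans hpx, hxd', hxd⟩ hpx)

theorem cov_inDeg_eq_zero_iff (hN : N.IsPhylo X) (hv : N.Visible v) :
    N.cov.inDeg v = 0 ↔ v = N.root := by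
  rw [inDeg_eq_zero_iff (M := N.cov) (hN.finite.subset fun _ hw => hw.1.1)]
  constructor
  · intro h
    by_contra hne
    obtain ⟨p, -, hp⟩ :=
      hN.exists_cov_arc_to hN.root_visible hv (hN.root_reach hv.1) (Ne.symm hne)
    exact h p hp
  · rintro rfl w hw
    obtain ⟨x, -, hx⟩ := exists_arc_to_of_reach (reach_of_cov_arc hw) (ne_of_cov_arc hw)
    exact hN.not_arc_to_root hx

theorem cov_outDeg_eq_zero_iff (hN : N.IsPhylo X) (hv : N.Visible v) :
    N.cov.outDeg v = 0 ↔ v ∈ N.leaves := by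
  rw [outDeg_eq_zero_iff (M := N.cov) (hN.finite.subset fun _ hw => hw.2.1.1)]
  constructor
  · intro h
    by_contra hleaf
    obtain ⟨y, hy, hvy, -⟩ := hN.exists_leaf_of_visible hv
    obtain ⟨c, hc, -⟩ :=
      hN.exists_cov_arc_from hv (visible_of_mem_leaves hy) hvy fun h => hleaf (h ▸ hy)
    exact h c hc
  · intro hv w hw
    obtain ⟨x, hx, -⟩ := exists_arc_from_of_reach (reach_of_cov_arc hw) (ne_of_cov_arc hw)
    exact hN.not_arc_from_leaf hv hx

theorem not_cov_subdividing_root (hN : N.IsPhylo X) : ¬ N.cov.Subdividing N.root := fun h => by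
  simp [Subdividing, (hN.cov_inDeg_eq_zero_iff hN.root_visible).2 rfl] at h

theorem not_cov_subdividing_of_mem_leaves (hN : N.IsPhylo X) (hy : y ∈ N.leaves) :
    ¬ N.cov.Subdividing y := fun h => by
  simp [Subdividing, (hN.cov_outDeg_eq_zero_iff (visible_of_mem_leaves hy)).2 hy] at h

theorem cov_inDeg_eq_one (hN : N.IsPhylo X) (hv : N.Visible v) (hroot : v ≠ N.root)
    (h : N.inDeg v = 1) : N.cov.inDeg v = 1 := by
  obtain ⟨p, hp⟩ := Set.ncard_eq_one.1 h
  have hpv : ∀ x, N.arc x v ↔ x = p := fun x => Set.ext_iff.1 hp x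
  have hpvis : N.Visible p := by
    obtain ⟨-, y, hy, hyA⟩ := visible_iff.1 hv
    refine visible_iff.2 ⟨(hN.arc_mem ((hpv p).2 rfl)).1, y, hy, fun h => hyA ?_⟩
    exact h.of_forall_arc_to (Ne.symm hroot) fun x hx => (hpv x).1 hx
  have hreach : ∀ x, N.reach x v → x ≠ v → N.reach x p := fun x hxv hne => by
    obtain ⟨q, hxq, hqv⟩ := exists_arc_to_of_reach hxv hne
    exact (hpv q).1 hqv ▸ hxq
  have hpv' : p ≠ v := fun h => hN.acyclic ((hpv p).2 rfl) (h ▸ .refl)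
  rw [inDeg, Set.ncard_eq_one]
  refine ⟨p, Set.ext fun w => ⟨fun hw => ?_, ?_⟩⟩
  · by_contra hwp
    exact hw.2.2.2.2 ⟨p, hpvis, Ne.symm hwp, hpv', hreach w (reach_of_cov_arc hw)
      (ne_of_cov_arc hw), .single ((hpv p).2 rfl)⟩
  · rintro rfl
    refine ⟨hpvis, hv, hpv', .single ((hpv _).2 rfl), ?_⟩
    rintro ⟨x, -, hxp, hxv, hpx, hxv'⟩
    exact hxp (hN.reach_antisymm (hreach x hxv' hxv) hpx)

theorem cov_outDeg_eq_one (hN : N.IsPhylo X) (hv : N.Visible v) (hleaf : v ∉ N.leaves)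
    (h : N.outDeg v = 1) : N.cov.outDeg v = 1 := by
  obtain ⟨c, hc⟩ := Set.ncard_eq_one.1 h
  have hvc : ∀ z, N.arc v z ↔ z = c := fun z => Set.ext_iff.1 hc z
  have hcvis : N.Visible c := by
    obtain ⟨-, y, hy, hyA⟩ := visible_iff.1 hv
    refine visible_iff.2 ⟨(hN.arc_mem ((hvc c).2 rfl)).2, y, hy, fun h => hyA ?_⟩
    exact h.of_forall_arc_from (fun h => hleaf (h ▸ hy)) fun z hz => (hvc z).1 hz
  have hreach : ∀ x, N.reach v x → v ≠ x → N.reach c x := fun x hvx hne => by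
    obtain ⟨q, hvq, hqx⟩ := exists_arc_from_of_reach hvx hne
    exact (hvc q).1 hvq ▸ hqx
  have hcv : c ≠ v := fun h => hN.acyclic ((hvc c).2 rfl) (h ▸ .refl)
  rw [outDeg, Set.ncard_eq_one]
  refine ⟨c, Set.ext fun w => ⟨fun hw => ?_, ?_⟩⟩
  · by_contra hwc
    exact hw.2.2.2.2 ⟨c, hcvis, hcv, Ne.symm hwc, .single ((hvc c).2 rfl),
      hreach w (reach_of_cov_arc hw) (ne_of_cov_arc hw)⟩
  · rintro rfl
    refine ⟨hv, hcvis, hcv.symm, .single ((hvc _).2 rfl), ?_⟩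
    rintro ⟨x, -, hxv, hxc, hvx, hxc'⟩
    exact hxc (hN.reach_antisymm hxc' (hreach x hvx (Ne.symm hxv)))

theorem exists_reflTransGen_arcFromSubdividing (hN : N.IsPhylo X) (hw : N.Visible w) :
    ∃ u, ReflTransGen N.cov.arcFromSubdividing w u ∧ ¬ N.cov.Subdividing u := by
  obtain ⟨u, hwu, hmax⟩ := hN.exists_reach_maximal
    (S := {u | ReflTransGen N.cov.arcFromSubdividing w u})
    (fun _ h => (visible_of_cov_reach (reach_of_reflTransGen_arcFromSubdividing h) hw).1)
    ⟨w, .refl⟩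
  refine ⟨u, hwu, fun hu => ?_⟩
  obtain ⟨c, hc⟩ := hu.exists_arc_from
  exact ne_of_cov_arc hc (hmax c (hwu.tail ⟨hc, hu⟩) (reach_of_cov_arc hc)).symm

theorem exists_reflTransGen_arcToSubdividing (hN : N.IsPhylo X) (hw : N.Visible w) :
    ∃ u, ReflTransGen N.cov.arcToSubdividing u w ∧ ¬ N.cov.Subdividing u := by
  obtain ⟨u, huw, hmin⟩ := hN.exists_reach_minimal
    (S := {u | ReflTransGen N.cov.arcToSubdividing u w})
    (fun _ h => (visible_of_cov_reach' (reach_of_reflTransGen_arcToSubdividing h) hw).1)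
    ⟨w, .refl⟩
  refine ⟨u, huw, fun hu => ?_⟩
  obtain ⟨p, hp⟩ := hu.exists_arc_to
  exact ne_of_cov_arc hp (hmin p (huw.head ⟨hp, hu⟩) (reach_of_cov_arc hp))

theorem reach_of_reach_of_reflTransGen_arcFromSubdividing (hN : N.IsPhylo X)
    (h : ReflTransGen N.cov.arcFromSubdividing a t) (hd : N.Visible d)
    (hds : ¬ N.cov.Subdividing d) (had : N.reach a d) : N.reach t d := by
  revert had
  induction h using ReflTransGen.head_induction_on with
  | refl => exact id
  | head hac _ ih =>
    intro had
    obtain ⟨c', hac', hc'd⟩ := hN.exists_cov_arc_from hac.1.1 hd had fun h => hds (h ▸ hac.2)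
    exact ih (hac.2.eq_of_arc_from hac' hac.1 ▸ hc'd)

/- The leaf witnessing the visibility of `a` lies below `t`, so a path root ⇝ `s` ⇝ `t` ⇝ leaf
avoiding `a` cannot exist. -/
theorem not_cov_avoids (hN : N.IsPhylo X) (ha : N.cov.Subdividing a)
    (hat : ReflTransGen N.cov.arcFromSubdividing a t) (ht : ¬ N.cov.Subdividing t)
    (has : ¬ N.reach a s) : ¬ N.cov.Avoids a s t := by
  intro hst
  have hav : N.Visible a := visible_of_cov_subdividing ha
  have hat' : N.reach a t := reach_of_cov_reach (reach_of_reflTransGen_arcFromSubdividing hat)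
  have hs : N.Visible s := visible_of_cov_reach' hst.reach
    (visible_of_cov_reach (reach_of_reflTransGen_arcFromSubdividing hat) hav)
  obtain ⟨y, hy, hay, hyA⟩ := hN.exists_leaf_of_visible hav
  have hty : N.reach t y := hN.reach_of_reach_of_reflTransGen_arcFromSubdividing hat
    (visible_of_mem_leaves hy) (hN.not_cov_subdividing_of_mem_leaves hy) hay
  refine hyA ((avoids_of_reach (hN.root_reach hs.1) fun h => has h.2).trans
    ((hst.of_cov hav).trans (avoids_of_reach hty fun h => ht ?_)))
  exact hN.reach_antisymm hat' h.1 ▸ ha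

theorem eq_of_arcToSubdividing_of_cov_arc (hN : N.IsPhylo X) (hv : ¬ N.cov.Subdividing v)
    (h₁ : ReflTransGen N.cov.arcToSubdividing u w₁) (hw₁ : N.cov.arc w₁ v)
    (h₂ : ReflTransGen N.cov.arcToSubdividing u w₂) (hw₂ : N.cov.arc w₂ v) : w₁ = w₂ := by
  by_contra hne
  wlog hu : w₁ ≠ u generalizing w₁ w₂
  · exact this h₂ hw₂ h₁ hw₁ (Ne.symm hne) fun h => hne ((not_not.1 hu).trans h.symm)
  obtain ⟨x, -, hxw⟩ := h₁.cases_tail.resolve_left hu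
  have hsub : N.cov.Subdividing w₁ := hxw.2
  refine hN.not_cov_avoids (s := u) hsub (.single ⟨hw₁, hsub⟩) hv (fun h => hu ?_) ?_
  · exact hN.reach_antisymm h (reach_of_cov_reach (reach_of_reflTransGen_arcToSubdividing h₁))
  refine avoids_iff_source.2 ⟨(ne_of_cov_arc hw₁).symm, .tail ?_ ⟨hw₂, Ne.symm hne⟩⟩
  refine ReflTransGen.mono (fun x z hxz => ⟨hxz.1, fun hx => hv ?_⟩) _ _ h₂
  exact hsub.eq_of_arc_from (hx ▸ hxz.1) hw₁ ▸ hxz.2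

theorem eq_of_cov_arc_of_arcFromSubdividing (hN : N.IsPhylo X) (hv : ¬ N.cov.Subdividing v)
    (hu : ¬ N.cov.Subdividing u)
    (hw₁ : N.cov.arc v w₁) (h₁ : ReflTransGen N.cov.arcFromSubdividing w₁ u)
    (hw₂ : N.cov.arc v w₂) (h₂ : ReflTransGen N.cov.arcFromSubdividing w₂ u) : w₁ = w₂ := by
  by_contra hne
  wlog hu₁ : w₁ ≠ u generalizing w₁ w₂
  · exact this hw₂ h₂ hw₁ h₁ (Ne.symm hne) fun h => hne ((not_not.1 hu₁).trans h.symm)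
  obtain ⟨x, hx, -⟩ := h₁.cases_head.resolve_left hu₁
  have hsub : N.cov.Subdividing w₁ := hx.2
  refine hN.not_cov_avoids hsub h₁ hu
    (fun h => ne_of_cov_arc hw₁ (hN.reach_antisymm (reach_of_cov_arc hw₁) h)) ?_
  refine ⟨ne_of_cov_arc hw₁, .head ⟨hw₂, Ne.symm hne⟩ ?_⟩
  refine ReflTransGen.mono (fun x z hxz => ⟨hxz.1, fun hz => hv ?_⟩) _ _ h₂
  exact hsub.eq_of_arc_to (hz ▸ hxz.1) hw₁ ▸ hxz.2

theorem normalise_inDeg (hN : N.IsPhylo X) (hv : N.Visible v) (hvs : ¬ N.cov.Subdividing v) :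
    N.normalise.inDeg v = N.cov.inDeg v := by
  have hstart : ∀ w ∈ {w | N.cov.arc w v},
      ∃ u, ReflTransGen N.cov.arcToSubdividing u w ∧ ¬ N.cov.Subdividing u :=
    fun w hw => hN.exists_reflTransGen_arcToSubdividing hw.1
  choose top htop hstop using hstart
  refine (Set.ncard_congr top (fun w hw => ?_) (fun w₁ w₂ hw₁ hw₂ h => ?_)
    (fun u hu => ?_)).symm
  · refine normalise_arc_iff'.2 ⟨⟨?_, hstop w hw⟩, ⟨hv, hvs⟩, w, htop w hw, hw⟩
    exact visible_of_cov_reach' (reach_of_reflTransGen_arcToSubdividing (htop w hw)) hw.1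
  · exact hN.eq_of_arcToSubdividing_of_cov_arc hvs (htop w₁ hw₁) hw₁ (h ▸ htop w₂ hw₂) hw₂
  · obtain ⟨hu, -, w, huw, hwv⟩ := normalise_arc_iff'.1 hu
    exact ⟨w, hwv, eq_of_reflTransGen_arcToSubdividing (htop w hwv) (hstop w hwv) huw hu.2⟩

theorem normalise_outDeg (hN : N.IsPhylo X) (hv : N.Visible v) (hvs : ¬ N.cov.Subdividing v) :
    N.normalise.outDeg v = N.cov.outDeg v := by
  have hend : ∀ w ∈ {w | N.cov.arc v w},
      ∃ u, ReflTransGen N.cov.arcFromSubdividing w u ∧ ¬ N.cov.Subdividing u :=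
    fun w hw => hN.exists_reflTransGen_arcFromSubdividing hw.2.1
  choose bot hbot hsbot using hend
  refine (Set.ncard_congr bot (fun w hw => ?_) (fun w₁ w₂ hw₁ hw₂ h => ?_)
    (fun u hu => ?_)).symm
  · refine normalise_arc_iff.2 ⟨⟨hv, hvs⟩, ⟨?_, hsbot w hw⟩, w, hw, hbot w hw⟩
    exact visible_of_cov_reach (reach_of_reflTransGen_arcFromSubdividing (hbot w hw)) hw.2.1
  · exact hN.eq_of_cov_arc_of_arcFromSubdividing hvs (hsbot w₁ hw₁) hw₁ (hbot w₁ hw₁) hw₂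
      (h ▸ hbot w₂ hw₂)
  · obtain ⟨-, hu, w, hvw, hwu⟩ := normalise_arc_iff.1 hu
    exact ⟨w, hvw, eq_of_reflTransGen_arcFromSubdividing (hbot w hvw) (hsbot w hvw) hwu hu.2⟩

theorem reach_and_ne_of_normalise_arc (hN : N.IsPhylo X) (h : N.normalise.arc u v) :
    N.reach u v ∧ u ≠ v := by
  obtain ⟨-, -, w, huw, hwv⟩ := normalise_arc_iff.1 h
  have hwv' : N.reach w v := reach_of_cov_reach (reach_of_reflTransGen_arcFromSubdividing hwv)
  refine ⟨(reach_of_cov_arc huw).trans hwv', ?_⟩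
  rintro rfl
  exact ne_of_cov_arc huw (hN.reach_antisymm (reach_of_cov_arc huw) hwv')

theorem reach_of_normalise_reach (hN : N.IsPhylo X) (h : N.normalise.reach u v) :
    N.reach u v :=
  ReflTransGen.lift' id (fun _ _ h => (hN.reach_and_ne_of_normalise_arc h).1) _ _ h

theorem normalise_leaves (hN : N.IsPhylo X) : N.normalise.leaves = N.leaves := by
  ext x
  constructor
  · rintro ⟨⟨hx, hxs⟩, h⟩
    exact (hN.cov_outDeg_eq_zero_iff hx).1 (hN.normalise_outDeg hx hxs ▸ h)
  · intro hx
    have hxs := hN.not_cov_subdividing_of_mem_leaves hx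
    have hvis := visible_of_mem_leaves hx
    exact ⟨⟨hvis, hxs⟩,
      (hN.normalise_outDeg hvis hxs).trans ((hN.cov_outDeg_eq_zero_iff hvis).2 hx)⟩

theorem normalise_inDeg_of_mem_leaves (hN : N.IsPhylo X) (hx : x ∈ N.leaves) :
    N.normalise.inDeg x = 1 := by
  have hxX : x ∈ X := hN.leaves_eq ▸ hx
  have hxr : x ≠ N.root := fun h => by simpa [h, hN.root_inDeg] using hN.leaf_inDeg x hxX
  have hxv := visible_of_mem_leaves hx
  rw [hN.normalise_inDeg hxv (hN.not_cov_subdividing_of_mem_leaves hx)]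
  exact hN.cov_inDeg_eq_one hxv hxr (hN.leaf_inDeg x hxX)

theorem normalise_interior_deg (hN : N.IsPhylo X) (hv : v ∈ N.normalise.verts)
    (hvr : v ≠ N.root) (hvl : v ∉ N.leaves) :
    (N.normalise.inDeg v = 1 ∧ 2 ≤ N.normalise.outDeg v) ∨
      (N.normalise.outDeg v = 1 ∧ 2 ≤ N.normalise.inDeg v) := by
  obtain ⟨hv, hvs⟩ := hv
  have hin := (hN.cov_inDeg_eq_zero_iff hv).not.2 hvr
  have hout := (hN.cov_outDeg_eq_zero_iff hv).not.2 hvl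
  have hsub : ¬ (N.cov.inDeg v = 1 ∧ N.cov.outDeg v = 1) := hvs
  rw [hN.normalise_inDeg hv hvs, hN.normalise_outDeg hv hvs]
  rcases hN.interior_deg v hv.1 hvr (hN.leaves_eq ▸ hvl) with ⟨h1, -⟩ | ⟨h1, -⟩
  · have := hN.cov_inDeg_eq_one hv hvr h1
    omega
  · have := hN.cov_outDeg_eq_one hv hvl h1
    omega

end IsPhylo

end Net

/-- The normalisation `Ñ` of a rooted phylogenetic network on `X` is
itself a rooted phylogenetic network on `X` (with the same root `ρ`, which is by
definition the root of `Ñ`). -/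
theorem stmt2 {V : Type*} (N : Net V) (X : Set V) (hN : N.IsPhylo X) :
    N.normalise.IsPhylo X := by
  have hroot := hN.root_visible
  have hroot' := hN.not_cov_subdividing_root
  refine ⟨hN.finite.subset fun _ h => h.1.1, hN.nonempty, fun _ _ h => ⟨h.1, h.2.1⟩,
    fun u v h hvu => ?_, ⟨hroot, hroot'⟩, ?_, fun v ⟨hv, hvs⟩ h => ?_,
    hN.normalise_leaves.trans hN.leaves_eq,
    fun x hx => hN.normalise_inDeg_of_mem_leaves (hN.leaves_eq ▸ hx),
    fun v hv hvr hvX => hN.normalise_interior_deg hv hvr (hN.leaves_eq ▸ hvX)⟩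
  · obtain ⟨huv, hne⟩ := hN.reach_and_ne_of_normalise_arc h
    exact hne (hN.reach_antisymm huv (hN.reach_of_normalise_reach hvu))
  · exact (hN.normalise_inDeg hroot hroot').trans ((hN.cov_inDeg_eq_zero_iff hroot).2 rfl)
  · rw [hN.normalise_inDeg hv hvs] at h
    exact (hN.cov_inDeg_eq_zero_iff hv).1 h
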